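/- arXiv:2007.15995 — 2 statements merged into one kernel-verified Lean document; each statement's English description precedes it below -/
import Mathlib

section
/- Let L ⊆ Q be an extension of Hom-Lie algebras. Then Q is an algebra of quotients of L if and only if Q is ideally absorbed into L. -/
/-- A Hom-Lie algebra structure on a vector space `Q` over a field `𝔽`, with the
twisting map `α` additionally satisfying condition (2.1):
`α [x,y] = [α x, y] = [x, α y]`. -/
structure HomLieAlgebra (𝔽 : Type*) [Field 𝔽] (Q : Type*) [AddCommGroup Q] [Module 𝔽 Q] where
  bracket : Q →ₗ[𝔽] Q →ₗ[𝔽] Q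
  alpha : Q →ₗ[𝔽] Q
  skew : ∀ x y, bracket x y = - bracket y x
  jacobi : ∀ x y z, bracket (alpha x) (bracket y z) + bracket (alpha y) (bracket z x)
      + bracket (alpha z) (bracket x y) = 0
  comm₁ : ∀ x y, alpha (bracket x y) = bracket (alpha x) y
  comm₂ : ∀ x y, alpha (bracket x y) = bracket x (alpha y)

namespace HomLieAlgebra

variable {𝔽 : Type*} [Field 𝔽] {Q : Type*} [AddCommGroup Q] [Module 𝔽 Q]
variable (H : HomLieAlgebra 𝔽 Q)

/-- `S` is a Hom-subalgebra: a subspace closed under `α` and the bracket. -/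
def IsSubalgebra (S : Submodule 𝔽 Q) : Prop :=
  (∀ x ∈ S, H.alpha x ∈ S) ∧ ∀ x ∈ S, ∀ y ∈ S, H.bracket x y ∈ S

/-- `I` is a Hom-ideal of the Hom-subalgebra `L`:
a subspace `I ⊆ L` with `α(I) ⊆ I` and `[I, L] ⊆ I`. -/
def IsIdealOf (L I : Submodule 𝔽 Q) : Prop :=
  I ≤ L ∧ (∀ x ∈ I, H.alpha x ∈ I) ∧ ∀ x ∈ I, ∀ y ∈ L, H.bracket x y ∈ I

/-- The α-annihilator of the set `S` inside the subalgebra `M`: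
`Ann_M(S) = {x ∈ M | [x, α(y)] = 0 for all y ∈ S}`. -/
def annIn (M : Submodule 𝔽 Q) (S : Set Q) : Set Q :=
  {x | x ∈ M ∧ ∀ y ∈ S, H.bracket x (H.alpha y) = 0}

/-- `I` is an essential Hom-ideal of `L`: it hits every nonzero Hom-ideal of `L`. -/
def IsEssentialIdealOf (L I : Submodule 𝔽 Q) : Prop :=
  H.IsIdealOf L I ∧ ∀ J : Submodule 𝔽 Q, H.IsIdealOf L J → J ≠ ⊥ → I ⊓ J ≠ ⊥

/-- The Hom-Lie algebra `L` is semiprime: `[I, α(I)] ≠ {0}` for every nonzero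
Hom-ideal `I` of `L`. -/
def IsSemiprimeOn (L : Submodule 𝔽 Q) : Prop :=
  ∀ I : Submodule 𝔽 Q, H.IsIdealOf L I → I ≠ ⊥ →
    ∃ x ∈ I, ∃ y ∈ I, H.bracket x (H.alpha y) ≠ 0

/-- The Hom-Lie algebra `L` is prime: `[I, α(J)] ≠ {0}` for all nonzero
Hom-ideals `I`, `J` of `L`. -/
def IsPrimeOn (L : Submodule 𝔽 Q) : Prop :=
  ∀ I J : Submodule 𝔽 Q, H.IsIdealOf L I → I ≠ ⊥ → H.IsIdealOf L J → J ≠ ⊥ →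
    ∃ x ∈ I, ∃ y ∈ J, H.bracket x (H.alpha y) ≠ 0

/-- The iterated brackets `[[…[[q,x₁],x₂],…],xₙ]` with `xᵢ ∈ L` (including `q` itself). -/
inductive IsWord (L : Submodule 𝔽 Q) (q : Q) : Q → Prop
  | base : IsWord L q q
  | step {p : Q} (x : Q) : IsWord L q p → x ∈ L → IsWord L q (H.bracket p x)

/-- `_L(q)`: the linear span in `Q` of `q` together with all the iterated brackets
`[[…[[q,x₁],x₂],…],xₙ]` with `xᵢ ∈ L`. -/
def wordSpan (L : Submodule 𝔽 Q) (q : Q) : Submodule 𝔽 Q :=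
  Submodule.span 𝔽 {p | H.IsWord L q p}

/-- `(L : q) = {x ∈ L | [x, α(_L(q))] ⊆ L}`, as a subspace of `Q`. -/
def quotIdeal (L : Submodule 𝔽 Q) (q : Q) : Submodule 𝔽 Q where
  carrier := {x | x ∈ L ∧ ∀ p ∈ H.wordSpan L q, H.bracket x (H.alpha p) ∈ L}
  add_mem' := by
    rintro a b ⟨haL, ha⟩ ⟨hbL, hb⟩
    refine ⟨L.add_mem haL hbL, fun p hp => ?_⟩
    rw [map_add, LinearMap.add_apply]
    exact L.add_mem (ha p hp) (hb p hp)
  zero_mem' := ⟨L.zero_mem, fun p _ => by simp⟩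
  smul_mem' := by
    rintro c a ⟨haL, ha⟩
    refine ⟨L.smul_mem c haL, fun p hp => ?_⟩
    rw [map_smul, LinearMap.smul_apply]
    exact L.smul_mem c (ha p hp)

/-- `Q` is an algebra of quotients of its Hom-subalgebra `L`: for all `p, q ∈ Q` with
`p ≠ 0` there is `x ∈ (L : q)` with `[x, α(p)] ≠ 0`. -/
def IsAlgebraOfQuotients (L : Submodule 𝔽 Q) : Prop :=
  ∀ p q : Q, p ≠ 0 → ∃ x ∈ H.quotIdeal L q, H.bracket x (H.alpha p) ≠ 0

/-- `Q` is a weak algebra of quotients of its Hom-subalgebra `L`: for every nonzero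
`q ∈ Q` there is `x ∈ L` with `0 ≠ [x, α(q)] ∈ L`. -/
def IsWeakAlgebraOfQuotients (L : Submodule 𝔽 Q) : Prop :=
  ∀ q : Q, q ≠ 0 → ∃ x ∈ L, H.bracket x (H.alpha q) ≠ 0 ∧ H.bracket x (H.alpha q) ∈ L

/-- `Q` is ideally absorbed into `L`: for every nonzero `q ∈ Q` there is a Hom-ideal `I`
of `L` with `Ann_L(I) = {0}` and `{0} ≠ [I, α(q)] ⊆ L`. -/
def IsIdeallyAbsorbed (L : Submodule 𝔽 Q) : Prop :=
  ∀ q : Q, q ≠ 0 → ∃ I : Submodule 𝔽 Q, H.IsIdealOf L I ∧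
    H.annIn L (I : Set Q) = {0} ∧
    (∃ y ∈ I, H.bracket y (H.alpha q) ≠ 0) ∧
    ∀ y ∈ I, H.bracket y (H.alpha q) ∈ (L : Set Q)

/-- The inner derivation `ad_q : p ↦ [α(q), p]`. -/
def ad (q : Q) : Module.End 𝔽 Q := H.bracket (H.alpha q)

end HomLieAlgebra

/-!
If `Q` is an algebra of quotients of `L`, then for `q ≠ 0` the subspace `(L : q)` itself is a
Hom-ideal witnessing ideal absorption: its annihilator vanishes because the defining property
of an algebra of quotients, applied to a would-be annihilating `x`, produces `y ∈ (L : q)`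
with `[x, α y] = -[y, α x] ≠ 0`.

Conversely, every Hom-ideal `I` with `[I, α q] ⊆ L` lies in `(L : q)`, since the Hom-Jacobi
identity propagates `[I, α q] ⊆ L` along the iterated brackets spanning `_L(q)`.
Given `p ≠ 0`, ideal absorption of `p` yields `y ∈ L` with `0 ≠ [y, α p] ∈ L`; if the ideal `I`
absorbing `q` satisfied `[I, α p] = 0`, Jacobi would put `[y, α p]` into `Ann_L(I) = {0}`.
-/

namespace HomLieAlgebra

variable {𝔽 : Type*} [Field 𝔽] {Q : Type*} [AddCommGroup Q] [Module 𝔽 Q]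
variable (H : HomLieAlgebra 𝔽 Q)

theorem bracket_alpha_comm (x y : Q) : H.bracket (H.alpha x) y = H.bracket x (H.alpha y) := by
  rw [← H.comm₁, H.comm₂]

theorem bracket_alpha_skew (x y : Q) :
    H.bracket x (H.alpha y) = -H.bracket y (H.alpha x) := by
  rw [← H.bracket_alpha_comm, H.skew]

theorem bracket_bracket_alpha (x z p : Q) :
    H.bracket (H.bracket x z) (H.alpha p) =
      H.bracket x (H.alpha (H.bracket z p)) + H.bracket (H.bracket x (H.alpha p)) z := by
  have hJ := H.jacobi x z p
  have h₁ : H.bracket (H.alpha z) (H.bracket p x) = H.bracket (H.bracket x (H.alpha p)) z := by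
    rw [H.bracket_alpha_comm z, H.comm₁ p x, H.skew (H.alpha p) x, map_neg, H.skew _ z]
  rw [H.bracket_alpha_comm x, h₁, H.skew (H.alpha p)] at hJ
  linear_combination (norm := module) -hJ

theorem bracket_alpha_bracket (x w z : Q) :
    H.bracket x (H.alpha (H.bracket w z)) =
      H.bracket (H.bracket z x) (H.alpha w) - H.bracket z (H.bracket x (H.alpha w)) := by
  have hJ := H.jacobi x w z
  rw [H.bracket_alpha_comm x, H.bracket_alpha_comm w, H.bracket_alpha_skew w,
    H.bracket_alpha_comm z, H.comm₂ x w] at hJ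
  linear_combination (norm := module) hJ

theorem mem_wordSpan_self (L : Submodule 𝔽 Q) (q : Q) : q ∈ H.wordSpan L q :=
  Submodule.subset_span IsWord.base

theorem bracket_mem_wordSpan {L : Submodule 𝔽 Q} {q p z : Q} (hp : p ∈ H.wordSpan L q)
    (hz : z ∈ L) : H.bracket p z ∈ H.wordSpan L q := by
  have hle : H.wordSpan L q ≤ (H.wordSpan L q).comap (H.bracket.flip z) :=
    Submodule.span_le.mpr fun _ hw => Submodule.subset_span (IsWord.step z hw hz)
  exact hle hp

variable {H} {L : Submodule 𝔽 Q}

theorem IsIdealOf.bracket_mem_right {I : Submodule 𝔽 Q} (hI : H.IsIdealOf L I) {x y : Q}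
    (hx : x ∈ L) (hy : y ∈ I) : H.bracket x y ∈ I := by
  rw [H.skew]
  exact neg_mem (hI.2.2 y hy x hx)

theorem quotIdeal_le (q : Q) : H.quotIdeal L q ≤ L := fun _ hx => hx.1

theorem bracket_alpha_mem_of_mem_quotIdeal {q x : Q} (hx : x ∈ H.quotIdeal L q) :
    H.bracket x (H.alpha q) ∈ L :=
  hx.2 q (H.mem_wordSpan_self L q)

theorem isIdealOf_quotIdeal (hL : H.IsSubalgebra L) (q : Q) :
    H.IsIdealOf L (H.quotIdeal L q) := by
  refine ⟨quotIdeal_le q, fun x hx => ⟨hL.1 x hx.1, fun p hp => ?_⟩,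
    fun x hx z hz => ⟨hL.2 x hx.1 z hz, fun p hp => ?_⟩⟩
  · rw [← H.comm₁]
    exact hL.1 _ (hx.2 p hp)
  · have hzp : H.bracket z p ∈ H.wordSpan L q := by
      rw [H.skew]
      exact neg_mem (H.bracket_mem_wordSpan hp hz)
    rw [H.bracket_bracket_alpha]
    exact L.add_mem (hx.2 _ hzp) (hL.2 _ (hx.2 p hp) z hz)

theorem annIn_quotIdeal (hQ : H.IsAlgebraOfQuotients L) (q : Q) :
    H.annIn L (H.quotIdeal L q : Set Q) = {0} := by
  refine Set.eq_singleton_iff_unique_mem.mpr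
    ⟨⟨L.zero_mem, fun y _ => by simp⟩, fun x hx => ?_⟩
  by_contra hx0
  obtain ⟨y, hy, hyx⟩ := hQ x q hx0
  exact hyx (by rw [H.bracket_alpha_skew, hx.2 y hy, neg_zero])

theorem le_quotIdeal (hL : H.IsSubalgebra L) {I : Submodule 𝔽 Q} (hI : H.IsIdealOf L I)
    {q : Q} (hq : ∀ x ∈ I, H.bracket x (H.alpha q) ∈ L) : I ≤ H.quotIdeal L q := by
  have hwords : ∀ w, H.IsWord L q w → ∀ x ∈ I, H.bracket x (H.alpha w) ∈ L := by
    intro w hw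
    induction hw with
    | base => exact hq
    | step z _ hz ih =>
      intro x hx
      rw [H.bracket_alpha_bracket]
      exact L.sub_mem (ih _ (hI.bracket_mem_right hz hx)) (hL.2 z hz _ (ih x hx))
  intro x hx
  have hspan : H.wordSpan L q ≤ L.comap ((H.bracket x).comp H.alpha) :=
    Submodule.span_le.mpr fun w hw => hwords w hw x hx
  exact ⟨hI.1 hx, fun p hp => hspan hp⟩

theorem bracket_alpha_mem_annIn {I : Submodule 𝔽 Q} (hI : H.IsIdealOf L I) {p y : Q}
    (hIp : ∀ x ∈ I, H.bracket x (H.alpha p) = 0) (hy : y ∈ L)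
    (hyp : H.bracket y (H.alpha p) ∈ L) : H.bracket y (H.alpha p) ∈ H.annIn L (I : Set Q) := by
  refine ⟨hyp, fun z hz => ?_⟩
  have hJ := H.jacobi z y (H.alpha p)
  have h₁ : H.bracket (H.alpha y) (H.bracket (H.alpha p) z) = 0 := by
    rw [H.skew (H.alpha p), hIp z hz, neg_zero, map_zero]
  have h₂ : H.bracket (H.alpha (H.alpha p)) (H.bracket z y) = 0 := by
    rw [H.bracket_alpha_comm, H.skew, ← H.comm₁, hIp _ (hI.2.2 z hz y hy), map_zero, neg_zero]
  rw [h₁, h₂, add_zero, add_zero] at hJ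
  rw [H.skew, hJ, neg_zero]

theorem exists_bracket_alpha_ne_zero {I : Submodule 𝔽 Q} (hI : H.IsIdealOf L I)
    (hann : H.annIn L (I : Set Q) = {0}) {p y : Q} (hy : y ∈ L)
    (hyp : H.bracket y (H.alpha p) ∈ L) (hne : H.bracket y (H.alpha p) ≠ 0) :
    ∃ x ∈ I, H.bracket x (H.alpha p) ≠ 0 := by
  by_contra! hIp
  have hmem := H.bracket_alpha_mem_annIn hI hIp hy hyp
  rw [hann] at hmem
  exact hne hmem

end HomLieAlgebra

/-- `Q` is an algebra of quotients of its Hom-subalgebra `L` iff `Q` is ideally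
absorbed into `L`. -/
theorem isAlgebraOfQuotients_iff_isIdeallyAbsorbed
    {𝔽 Q : Type*} [Field 𝔽] [AddCommGroup Q] [Module 𝔽 Q]
    (H : HomLieAlgebra 𝔽 Q) (L : Submodule 𝔽 Q) (hL : H.IsSubalgebra L) :
    H.IsAlgebraOfQuotients L ↔ H.IsIdeallyAbsorbed L := by
  constructor
  · intro hQ q hq
    exact ⟨H.quotIdeal L q, H.isIdealOf_quotIdeal hL q, H.annIn_quotIdeal hQ q, hQ q q hq,
      fun _ hy => H.bracket_alpha_mem_of_mem_quotIdeal hy⟩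
  · intro hA p q hp
    obtain ⟨J, hJ, -, ⟨y, hyJ, hy⟩, hJL⟩ := hA p hp
    rcases eq_or_ne q 0 with rfl | hq
    · exact ⟨y, H.le_quotIdeal hL hJ (fun x _ => by simp) hyJ, hy⟩
    · obtain ⟨I, hI, hIann, -, hIL⟩ := hA q hq
      obtain ⟨x, hxI, hx⟩ :=
        H.exists_bracket_alpha_ne_zero hI hIann (hJ.1 hyJ) (hJL y hyJ) hy
      exact ⟨x, H.le_quotIdeal hL hI hIL hxI, hx⟩
end

section
/- Let L ⊆ Q be an extension of Hom-Lie algebras such that Q is a weak algebra of quotients of L, and let I be a Hom-ideal of L with Ann_L(I) = {0}. Then rann_{A(Q)}(A_Q(I)) = {0}, where A(Q) is the associative subalgebra of End(Q) generated by {ad_q : q ∈ Q}, A_Q(I) is the subalgebra of A(Q) generated by {ad_y : y ∈ I}, and rann_{A(Q)}(A_Q(I)) = {μ ∈ A(Q) : νμ = 0 for all ν ∈ A_Q(I)}. -/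
/-! If `ν μ = 0` for all `ν ∈ A_Q(I)`, every value `r = μ p` satisfies `[α I, r] = 0`. Were
`r ≠ 0`, the weak-quotient property would give `x ∈ L` with `0 ≠ [x, α r] ∈ L`, and the Jacobi
identity together with (2.1) shows that `[x, α r]` lies in `Ann_L(I) = {0}`. -/

namespace HomLieAlgebra

variable {𝔽 Q : Type*} [Field 𝔽] [AddCommGroup Q] [Module 𝔽 Q] (H : HomLieAlgebra 𝔽 Q)
  {L I : Submodule 𝔽 Q}

theorem bracket_alpha_left (a b : Q) : H.bracket (H.alpha a) b = H.bracket a (H.alpha b) := by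
  rw [← H.comm₁, H.comm₂]

theorem bracket_alpha_eq_zero_of_forall_ad_eq_zero {r : Q} (hr : ∀ w ∈ I, H.ad w r = 0) {w : Q} (hw : w ∈ I) :
    H.bracket (H.alpha r) w = 0 := by
  rw [H.skew, ← H.bracket_alpha_left, neg_eq_zero]
  exact hr w hw

/-- In the Jacobi identity for `y, x, α r` the other two terms are `[α x, [α r, y]]` and
`[α (α r), [y, x]] = [α r, α [y, x]]`, which vanish because `α [y, x] ∈ I`. -/
theorem bracket_alpha_mem_annIn_s16 (hI : H.IsIdealOf L I) {r x : Q}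
    (hr : ∀ w ∈ I, H.ad w r = 0) (hx : x ∈ L) (hxr : H.bracket x (H.alpha r) ∈ L) :
    H.bracket x (H.alpha r) ∈ H.annIn L (I : Set Q) := by
  refine ⟨hxr, fun y hy => ?_⟩
  have hyx : H.alpha (H.bracket y x) ∈ I := hI.2.1 _ (hI.2.2 y hy x hx)
  have jacobi := H.jacobi y x (H.alpha r)
  rw [H.bracket_alpha_eq_zero_of_forall_ad_eq_zero hr hy, map_zero, H.bracket_alpha_left (H.alpha r),
    H.bracket_alpha_eq_zero_of_forall_ad_eq_zero hr hyx, add_zero, add_zero] at jacobi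
  rw [H.skew, jacobi, neg_zero]

theorem eq_zero_of_forall_ad_eq_zero (hw : H.IsWeakAlgebraOfQuotients L)
    (hI : H.IsIdealOf L I) (hann : H.annIn L (I : Set Q) = {0}) {r : Q}
    (hr : ∀ w ∈ I, H.ad w r = 0) : r = 0 := by
  by_contra hr0
  obtain ⟨x, hx, hxr0, hxr⟩ := hw r hr0
  have hann_mem := H.bracket_alpha_mem_annIn_s16 hI hr hx hxr
  rw [hann] at hann_mem
  exact hxr0 hann_mem

end HomLieAlgebra

theorem rann_eq_zero_of_weakQuotients_general
    {𝔽 Q : Type*} [Field 𝔽] [AddCommGroup Q] [Module 𝔽 Q]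
    (H : HomLieAlgebra 𝔽 Q) (L : Submodule 𝔽 Q)
    (hw : H.IsWeakAlgebraOfQuotients L)
    (I : Submodule 𝔽 Q) (hI : H.IsIdealOf L I)
    (hann : H.annIn L (I : Set Q) = {0}) :
    {μ : Module.End 𝔽 Q | μ ∈ NonUnitalAlgebra.adjoin 𝔽 (Set.range H.ad) ∧
      ∀ ν ∈ NonUnitalAlgebra.adjoin 𝔽 (H.ad '' (I : Set Q)), ν * μ = 0} = {0} := by
  ext μ
  refine ⟨fun ⟨_, hμ⟩ => LinearMap.ext fun p => ?_,
    fun hμ => ⟨hμ ▸ zero_mem _, fun ν _ => hμ ▸ mul_zero ν⟩⟩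
  refine H.eq_zero_of_forall_ad_eq_zero hw hI hann fun w hw => ?_
  simpa using congr($(hμ _ (NonUnitalAlgebra.subset_adjoin 𝔽 ⟨w, hw, rfl⟩)) p)

/-- If `Q` is a weak algebra of quotients of its Hom-subalgebra `L` and `I` is a
Hom-ideal of `L` with `Ann_L(I) = {0}`, then `rann_{A(Q)}(A_Q(I)) = {0}`, where `A(Q)`
is the (possibly non-unital) associative subalgebra of `End(Q)` generated by the inner
derivations `ad_q` (`q ∈ Q`) and `A_Q(I)` the subalgebra generated by `ad_y` (`y ∈ I`). -/
theorem rann_eq_zero_of_weakQuotients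
    {𝔽 Q : Type*} [Field 𝔽] [AddCommGroup Q] [Module 𝔽 Q]
    (H : HomLieAlgebra 𝔽 Q) (L : Submodule 𝔽 Q) (hL : H.IsSubalgebra L)
    (hw : H.IsWeakAlgebraOfQuotients L)
    (I : Submodule 𝔽 Q) (hI : H.IsIdealOf L I)
    (hann : H.annIn L (I : Set Q) = {0}) :
    {μ : Module.End 𝔽 Q | μ ∈ NonUnitalAlgebra.adjoin 𝔽 (Set.range H.ad) ∧
      ∀ ν ∈ NonUnitalAlgebra.adjoin 𝔽 (H.ad '' (I : Set Q)), ν * μ = 0} = {0} :=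
  rann_eq_zero_of_weakQuotients_general H L hw I hI hann
end
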